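/- arXiv:2102.12201 — 3 statements merged into one kernel-verified Lean document; each statement's English description precedes it below -/
import Mathlib

section
/- Let G be a finite graph, let X ⊆ V(G) be a nonempty set of vertices, and let r ≥ 1. Then there exist a subset Z ⊆ X and a natural number i with 0 ≤ i ≤ |X| − 1 such that, setting R = 3^i · r: (i) N_R(z) ∩ N_R(z') = ∅ for all distinct z, z' ∈ Z, and (ii) N_r(X) ⊆ N_R(Z). -/
/-!
Induct on `|X|`. If the `r`-balls around the points of `X` are pairwise disjoint, take `Z = X`
and `i = 0`. Otherwise two balls around `z ≠ z'` meet, so every point within `r` of `z'` lies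
within `3r` of `z`; hence `N_r(X) ⊆ N_{3r}(X \ {z'})`, and the induction hypothesis applied to
`X \ {z'}` with radius `3r` produces `Z` and `i`, which give the claim for `X` with `i + 1`.
-/

/-- The (closed) `ρ`-neighbourhood (ball) of a vertex `v` in a graph `G`:
all vertices at distance at most `ρ` from `v` (distance is `∞` if there is no path). -/
def nbhd {V : Type} (G : SimpleGraph V) (ρ : ℕ) (v : V) : Set V :=
  {u : V | G.edist u v ≤ (ρ : ℕ∞)}

/-- The (closed) `ρ`-neighbourhood of a set `S` of vertices. -/
def nbhdSet {V : Type} (G : SimpleGraph V) (ρ : ℕ) (S : Set V) : Set V :=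
  {u : V | ∃ s ∈ S, G.edist u s ≤ (ρ : ℕ∞)}

variable {V : Type} {G : SimpleGraph V}

lemma nbhdSet_mono_radius {ρ ρ' : ℕ} (h : ρ ≤ ρ') (S : Set V) :
    nbhdSet G ρ S ⊆ nbhdSet G ρ' S :=
  fun _ ⟨s, hs, hus⟩ => ⟨s, hs, hus.trans (Nat.cast_le.mpr h)⟩

lemma edist_le_three_mul_of_mem_nbhd {r : ℕ} {u w z z' : V} (hu : u ∈ nbhd G r z')
    (hwz : w ∈ nbhd G r z) (hwz' : w ∈ nbhd G r z') :
    G.edist u z ≤ ((3 * r : ℕ) : ℕ∞) :=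
  calc G.edist u z ≤ G.edist u w + G.edist w z := G.edist_triangle
    _ ≤ G.edist u z' + G.edist z' w + G.edist w z := by gcongr; exact G.edist_triangle
    _ ≤ r + r + r := by
        gcongr
        · exact hu
        · rw [G.edist_comm]; exact hwz'
        · exact hwz
    _ = ((3 * r : ℕ) : ℕ∞) := by push_cast; ring

lemma nbhdSet_subset_nbhdSet_diff_singleton {r : ℕ} {S : Set V} {z z' w : V} (hz : z ∈ S)
    (hzz' : z ≠ z') (hwz : w ∈ nbhd G r z) (hwz' : w ∈ nbhd G r z') :
    nbhdSet G r S ⊆ nbhdSet G (3 * r) (S \ {z'}) := by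
  rintro u ⟨s, hs, hus⟩
  by_cases hsz' : s = z'
  · subst hsz'
    exact ⟨z, ⟨hz, hzz'⟩, edist_le_three_mul_of_mem_nbhd hus hwz hwz'⟩
  · exact nbhdSet_mono_radius (by omega) _ ⟨s, ⟨hs, hsz'⟩, hus⟩

theorem exists_pairwiseDisjoint_nbhd_cover [DecidableEq V] (G : SimpleGraph V) (X : Finset V)
    (r : ℕ) :
    ∃ (Z : Finset V) (i : ℕ), Z ⊆ X ∧ i ≤ X.card - 1 ∧
      (Z : Set V).PairwiseDisjoint (nbhd G (3 ^ i * r)) ∧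
      nbhdSet G r X ⊆ nbhdSet G (3 ^ i * r) Z := by
  induction X using Finset.strongInduction generalizing r with
  | H X ih =>
  by_cases hX : (X : Set V).PairwiseDisjoint (nbhd G r)
  · exact ⟨X, 0, subset_rfl, Nat.zero_le _, by simpa using hX, by simp⟩
  obtain ⟨z, hz, z', hz', hzz', hmeet⟩ :
      ∃ z ∈ X, ∃ z' ∈ X, z ≠ z' ∧ ¬Disjoint (nbhd G r z) (nbhd G r z') := by
    simpa [Set.PairwiseDisjoint, Set.Pairwise] using hX
  obtain ⟨w, hwz, hwz'⟩ := Set.not_disjoint_iff.mp hmeet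
  obtain ⟨Z, i, hZ, hi, hdisj, hcover⟩ := ih (X.erase z') (Finset.erase_ssubset hz') (3 * r)
  have hR : 3 ^ (i + 1) * r = 3 ^ i * (3 * r) := by ring
  refine ⟨Z, i + 1, hZ.trans (X.erase_subset z'), ?_, hR ▸ hdisj, hR ▸ ?_⟩
  · have hpos : 0 < (X.erase z').card := Finset.card_pos.mpr ⟨z, Finset.mem_erase.mpr ⟨hzz', hz⟩⟩
    have := Finset.card_erase_of_mem hz'
    omega
  · rw [Finset.coe_erase] at hcover
    exact (nbhdSet_subset_nbhdSet_diff_singleton hz hzz' hwz hwz').trans hcover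

theorem stmt_0_general {V : Type} [DecidableEq V] (G : SimpleGraph V)
    (X : Finset V) (r : ℕ) :
    ∃ (Z : Finset V) (i : ℕ), Z ⊆ X ∧ i ≤ X.card - 1 ∧
      (∀ z ∈ Z, ∀ z' ∈ Z, z ≠ z' →
        nbhd G (3 ^ i * r) z ∩ nbhd G (3 ^ i * r) z' = ∅) ∧
      nbhdSet G r (X : Set V) ⊆ nbhdSet G (3 ^ i * r) (Z : Set V) := by
  obtain ⟨Z, i, hZ, hi, hdisj, hcover⟩ := exists_pairwiseDisjoint_nbhd_cover G X r
  exact ⟨Z, i, hZ, hi,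
    fun z hz z' hz' hne => Set.disjoint_iff_inter_eq_empty.mp (hdisj hz hz' hne), hcover⟩

/-- For every finite graph `G`, nonempty vertex set `X` and radius `r ≥ 1`,
there are `Z ⊆ X` and `0 ≤ i ≤ |X| - 1` such that, with `R = 3^i·r`, the `R`-balls around
distinct elements of `Z` are disjoint, and `N_r(X) ⊆ N_R(Z)`. -/
theorem stmt_0 {V : Type} [Fintype V] [DecidableEq V] (G : SimpleGraph V)
    (X : Finset V) (hX : X.Nonempty) (r : ℕ) (hr : 1 ≤ r) :
    ∃ (Z : Finset V) (i : ℕ), Z ⊆ X ∧ i ≤ X.card - 1 ∧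
      (∀ z ∈ Z, ∀ z' ∈ Z, z ≠ z' →
        nbhd G (3 ^ i * r) z ∩ nbhd G (3 ^ i * r) z' = ∅) ∧
      nbhdSet G r (X : Set V) ⊆ nbhdSet G (3 ^ i * r) (Z : Set V) :=
  stmt_0_general G X r
end

section
/- Let G be a finite graph, let k, ℓ, s ≥ 1 be integers, let r ≥ 0, let ε > 0 be a real number, and let Γ be a nonempty finite set of k-tuples of vertices of G. For u ∈ V(G), let Γ(u) = {v̄ ∈ Γ : dist_G(u, v̄) ≤ 2r+1}. Then there exists a set X ⊆ V(G) with |X| ≤ k·ℓ·s/ε such that |Γ(u)| < (ε/(ℓ·s))·|Γ| for every vertex u ∈ V(G) ∖ N_{4r+2}(X). -/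
/-! Take a maximal set `X` of vertices `u` with `|Γ(u)| ≥ ε|Γ|/(ℓs)` that are pairwise at
distance more than `4r+2`; by maximality every such `u` lies within `4r+2` of `X`. The balls
of radius `2r+1` around the points of `X` are disjoint, so a tuple lies in `Γ(u)` for at most
`k` points `u ∈ X`, and double counting gives `|X| · ε|Γ|/(ℓs) ≤ k|Γ|`. -/

/-- The set `Γ(u)` of `k`-tuples in `Γ` at distance at most `2r+1` from `u`
(distance from `u` to a tuple is the minimum over its entries, `∞` if unreachable). -/
def affectedTuples {V : Type} (G : SimpleGraph V) (r : ℕ) {k : ℕ}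
    (Γ : Finset (Fin k → V)) (u : V) : Set (Fin k → V) :=
  {vb : Fin k → V | vb ∈ Γ ∧ ∃ i, G.edist u (vb i) ≤ ((2 * r + 1 : ℕ) : ℕ∞)}

namespace SimpleGraph

variable {V : Type*} (G : SimpleGraph V)

theorem exists_maximal_pairwise_lt_edist_finset [Finite V] (P : V → Prop) (d : ℕ∞) :
    ∃ X : Finset V, (∀ x ∈ X, P x) ∧ (X : Set V).Pairwise (fun x y => d < G.edist x y) ∧
      ∀ u, P u → ∃ x ∈ X, G.edist u x ≤ d := by
  classical
  let S : Set (Finset V) :=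
    {X | (∀ x ∈ X, P x) ∧ (X : Set V).Pairwise (fun x y => d < G.edist x y)}
  obtain ⟨X, ⟨hP, hsep⟩, hmax⟩ := S.toFinite.exists_maximal ⟨∅, by simp [S]⟩
  refine ⟨X, hP, hsep, fun u hu => ?_⟩
  by_contra! hfar
  have hinsert : insert u X ∈ S := by
    refine ⟨Finset.forall_mem_insert _ _ _ |>.mpr ⟨hu, hP⟩, ?_⟩
    rw [Finset.coe_insert]
    exact hsep.insert fun x hx _ => ⟨hfar x hx, G.edist_comm ▸ hfar x hx⟩
  have huX : u ∈ X := hmax hinsert (Finset.subset_insert u X) (Finset.mem_insert_self u X)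
  simpa using hfar u huX

variable {G}

theorem card_filter_edist_le_le_one {X : Finset V} {R : ℕ∞}
    (hX : (X : Set V).Pairwise (fun x y => R + R < G.edist x y)) (v : V) :
    (X.filter fun x => G.edist x v ≤ R).card ≤ 1 := by
  refine Finset.card_le_one.mpr fun x hx y hy => ?_
  rw [Finset.mem_filter] at hx hy
  by_contra hxy
  refine (hX hx.1 hy.1 hxy).not_ge ?_
  calc G.edist x y ≤ G.edist x v + G.edist v y := G.edist_triangle
    _ ≤ R + R := add_le_add hx.2 (G.edist_comm ▸ hy.2)

theorem card_filter_exists_edist_le_le_card {ι : Type*} [Fintype ι] {X : Finset V} {R : ℕ∞}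
    (hX : (X : Set V).Pairwise (fun x y => R + R < G.edist x y)) (vb : ι → V) :
    (X.filter fun x => ∃ i, G.edist x (vb i) ≤ R).card ≤ Fintype.card ι := by
  classical
  have hunion : (X.filter fun x => ∃ i, G.edist x (vb i) ≤ R) =
      Finset.univ.biUnion fun i => X.filter fun x => G.edist x (vb i) ≤ R := by
    ext x; simp
  calc _ ≤ ∑ i, (X.filter fun x => G.edist x (vb i) ≤ R).card :=
        hunion ▸ Finset.card_biUnion_le
    _ ≤ ∑ _i : ι, 1 := Finset.sum_le_sum fun i _ => card_filter_edist_le_le_one hX (vb i)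
    _ = Fintype.card ι := by simp

theorem card_mul_le_of_pairwise_lt_edist {ι : Type*} [Fintype ι] {X : Finset V} {R : ℕ∞}
    (hX : (X : Set V).Pairwise (fun x y => R + R < G.edist x y)) (Γ : Finset (ι → V)) {t : ℝ}
    (hheavy : ∀ u ∈ X, t ≤ {vb | vb ∈ Γ ∧ ∃ i, G.edist u (vb i) ≤ R}.ncard) :
    X.card * t ≤ Fintype.card ι * Γ.card := by
  have := Finset.card_nsmul_le_card_nsmul (fun u (vb : ι → V) => ∃ i, G.edist u (vb i) ≤ R)
    (fun u hu => by simpa [← Set.ncard_coe_finset, Finset.bipartiteAbove] using hheavy u hu)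
    fun vb _ => (Nat.cast_le.mpr (card_filter_exists_edist_le_le_card hX vb) : (_ : ℝ) ≤ _)
  simpa [nsmul_eq_mul, mul_comm] using this

end SimpleGraph

theorem stmt_5_general {V : Type} [Fintype V] (G : SimpleGraph V)
    (k l s r : ℕ) (hl : 1 ≤ l) (hs : 1 ≤ s)
    (ε : ℝ) (hε : 0 < ε)
    (Γ : Finset (Fin k → V)) (hΓ : Γ.Nonempty) :
    ∃ X : Finset V, (X.card : ℝ) ≤ (k : ℝ) * l * s / ε ∧
      ∀ u : V, (∀ x ∈ X, ¬ G.edist u x ≤ ((4 * r + 2 : ℕ) : ℕ∞)) →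
        ((affectedTuples G r Γ u).ncard : ℝ) < ε / ((l : ℝ) * s) * Γ.card := by
  have hls : (0 : ℝ) < l * s := by positivity
  have hΓpos : (0 : ℝ) < Γ.card := by exact_mod_cast hΓ.card_pos
  obtain ⟨X, hheavy, hsep, hcover⟩ := G.exists_maximal_pairwise_lt_edist_finset
    (fun u => ε / ((l : ℝ) * s) * Γ.card ≤ (affectedTuples G r Γ u).ncard) ((4 * r + 2 : ℕ) : ℕ∞)
  refine ⟨X, ?_, fun u hfar => lt_of_not_ge fun hu => ?_⟩
  · have hd : ((4 * r + 2 : ℕ) : ℕ∞) = ((2 * r + 1 : ℕ) : ℕ∞) + ((2 * r + 1 : ℕ) : ℕ∞) := by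
      push_cast; ring
    rw [hd] at hsep
    have hcount := SimpleGraph.card_mul_le_of_pairwise_lt_edist hsep Γ hheavy
    rw [Fintype.card_fin, ← mul_assoc, mul_div_assoc'] at hcount
    rw [le_div_iff₀ hε, mul_assoc, ← div_le_iff₀ hls]
    exact le_of_mul_le_mul_right hcount hΓpos
  · obtain ⟨x, hx, hux⟩ := hcover u hu
    exact hfar x hx hux

/-- For every finite graph `G`, integers `k, ℓ, s ≥ 1`, radius `r ≥ 0`,
real `ε > 0` and nonempty finite set `Γ` of `k`-tuples of vertices, there is a set `X` of
at most `k·ℓ·s/ε` vertices such that every vertex `u` outside the `(4r+2)`-neighbourhood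
of `X` satisfies `|Γ(u)| < (ε/(ℓ·s))·|Γ|`. -/
theorem stmt_5 {V : Type} [Fintype V] [DecidableEq V] (G : SimpleGraph V)
    (k l s r : ℕ) (hk : 1 ≤ k) (hl : 1 ≤ l) (hs : 1 ≤ s)
    (ε : ℝ) (hε : 0 < ε)
    (Γ : Finset (Fin k → V)) (hΓ : Γ.Nonempty) :
    ∃ X : Finset V, (X.card : ℝ) ≤ (k : ℝ) * l * s / ε ∧
      ∀ u : V, (∀ x ∈ X, ¬ G.edist u x ≤ ((4 * r + 2 : ℕ) : ℕ∞)) →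
        ((affectedTuples G r Γ u).ncard : ℝ) < ε / ((l : ℝ) * s) * Γ.card :=
  stmt_5_general G k l s r hl hs ε hε Γ hΓ
end

section
/- Let G be a finite graph, let r, s ≥ 1, and suppose Splitter has a winning strategy for the (r,s)-splitter game on G. Then for every subgraph H of G (i.e., V(H) ⊆ V(G) and E(H) ⊆ E(G)), Splitter has a winning strategy for the (r,s)-splitter game on H. -/
/-- `splitterWin r s V G` holds iff Splitter has a winning strategy for the
`(r,s)`-splitter game on `G`: either `G` has no vertices, or `s ≥ 1` and for every
vertex `v` that Connector may pick, Splitter can answer with some `w` in the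
`r`-neighbourhood of `v` such that she wins the `(r, s-1)`-game on the subgraph
induced on `N_r(v) \ {w}`. -/
def splitterWin (r : ℕ) : ℕ → (V : Type) → SimpleGraph V → Prop
  | 0, V, _ => IsEmpty V
  | s + 1, V, G =>
      IsEmpty V ∨ ∀ v : V, ∃ w : V, G.edist w v ≤ (r : ℕ∞) ∧
        splitterWin r s {u : V // G.edist u v ≤ (r : ℕ∞) ∧ u ≠ w}
          (G.induce {u : V | G.edist u v ≤ (r : ℕ∞) ∧ u ≠ w})

/-!
A subgraph `H` of `G` comes with an injective homomorphism `f : H →g G`, and homomorphisms do not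
increase distances, so every `r`-ball of `H` embeds into the corresponding `r`-ball of `G`.
Splitter therefore plays on `H` by copying her strategy on `G`: when Connector picks `v`, she
answers the preimage of her `G`-answer to `f v` if it lies in the `r`-ball of `v`, and otherwise
`v` itself (her `G`-answer then removes nothing from the image of the ball). Either way the
remaining arena of `H` embeds into the remaining arena of `G`, and induction on `s` finishes.
-/

open Function SimpleGraph

lemma SimpleGraph.Hom.edist_le {V W : Type*} {G : SimpleGraph V} {G' : SimpleGraph W}
    (f : G →g G') (u v : V) : G'.edist (f u) (f v) ≤ G.edist u v :=
  le_iInf fun p => by simpa using G'.edist_le (p.map f)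

theorem splitterWin.of_injective_hom {r : ℕ} (s : ℕ) {V W : Type} {G : SimpleGraph V}
    {H : SimpleGraph W} (f : H →g G) (hf : Injective f) (hG : splitterWin r s V G) :
    splitterWin r s W H := by
  induction s generalizing V W G H with
  | zero => exact ⟨fun v => hG.false (f v)⟩
  | succ s ih =>
    rcases hG with hV | hG
    · exact .inl ⟨fun v => hV.false (f v)⟩
    refine .inr fun v => ?_
    obtain ⟨w, -, hw⟩ := hG (f v)
    have answer : ∃ w', H.edist w' v ≤ r ∧
        ∀ u, H.edist u v ≤ r → u ≠ w' → f u ≠ w := by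
      by_cases hpre : ∃ w', H.edist w' v ≤ r ∧ f w' = w
      · obtain ⟨w', hw'v, rfl⟩ := hpre
        exact ⟨w', hw'v, fun u _ hu => hf.ne hu⟩
      · push Not at hpre
        exact ⟨v, by simp, fun u hu _ => hpre u hu⟩
    obtain ⟨w', hw'v, hfw⟩ := answer
    have maps : Set.MapsTo f {u | H.edist u v ≤ r ∧ u ≠ w'}
        {x | G.edist x (f v) ≤ r ∧ x ≠ w} := fun u ⟨hu, huw⟩ =>
      ⟨(f.edist_le u v).trans hu, hfw u hu huw⟩
    exact ⟨w', hw'v, ih _ (induceHom_injective f maps hf.injOn) hw⟩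

theorem stmt_11_general {V : Type} (G : SimpleGraph V) (r s : ℕ)
    (hwin : splitterWin r s V G) (H : G.Subgraph) :
    splitterWin r s H.verts H.coe :=
  hwin.of_injective_hom s H.hom Subgraph.hom_injective

/-- If Splitter wins the `(r,s)`-splitter game on a finite graph `G`,
then she wins the `(r,s)`-splitter game on every subgraph `H` of `G`. -/
theorem stmt_11 {V : Type} [Fintype V] (G : SimpleGraph V) (r s : ℕ)
    (hr : 1 ≤ r) (hs : 1 ≤ s) (hwin : splitterWin r s V G) (H : G.Subgraph) :
    splitterWin r s H.verts H.coe :=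
  stmt_11_general G r s hwin H
end
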